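/- arXiv:2207.03941 — 2 statements merged into one kernel-verified Lean document; each statement's English description precedes it below -/
import Mathlib

section
/- Every cycle whose length is divisible by 4 admits a locally irregular edge coloring with 2 colors. -/
/-- The number of edges of color `c` incident to vertex `v` under edge coloring `φ`
(the `c`-degree of `v`). -/
noncomputable def colorDeg {V α : Type*} (G : SimpleGraph V)
    (φ : Sym2 V → α) (c : α) (v : V) : ℕ :=
  Nat.card {w : V // G.Adj v w ∧ φ s(v, w) = c}

/-- An edge coloring of `G` is locally irregular if within every color class the
endpoints of each edge have distinct degrees (isolated vertices are irrelevant). -/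
def IsLocIrrColoring {V α : Type*} (G : SimpleGraph V) (φ : Sym2 V → α) : Prop :=
  ∀ ⦃v w : V⦄, G.Adj v w →
    colorDeg G φ (φ s(v, w)) v ≠ colorDeg G φ (φ s(v, w)) w

/-!
Colour the edges of the cycle in consecutive pairs, `0 0 1 1 0 0 1 1 …`; since `4 ∣ n` this
closes up consistently. Every edge then shares its colour with exactly one of its two
neighbouring edges, so in its colour class one endpoint has degree `2` and the other degree `1`.
-/

open Finset SimpleGraph

theorem colorDeg_eq_card_filter {V α : Type*} [DecidableEq α] (G : SimpleGraph V)
    [G.LocallyFinite] (φ : Sym2 V → α) (c : α) (v : V) :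
    colorDeg G φ c v = #{w ∈ G.neighborFinset v | φ s(v, w) = c} := by
  rw [colorDeg, ← Nat.card_eq_finsetCard]
  exact Nat.card_congr <| Equiv.subtypeEquivRight fun w => by simp

namespace Fin

variable {m : ℕ}

theorem add_one_add_one_ne_self (v : Fin (m + 3)) : v + 1 + 1 ≠ v := by
  rw [ne_eq, add_assoc, add_eq_left]
  exact ne_of_beq_false rfl

theorem sub_one_ne_add_one (v : Fin (m + 3)) : v - 1 ≠ v + 1 := fun h =>
  add_one_add_one_ne_self (v - 1) (by rw [sub_add_cancel, h])

theorem sym2_add_one_injective : Function.Injective fun i : Fin (m + 3) => s(i, i + 1) := by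
  intro i j h
  rcases Sym2.eq_iff.mp h with ⟨hij, -⟩ | ⟨rfl, hji⟩
  · exact hij
  · exact absurd hji (add_one_add_one_ne_self j)

end Fin

section Cycle

variable {m : ℕ} {α : Type*}

theorem colorDeg_cycleGraph [DecidableEq α] (φ : Sym2 (Fin (m + 3)) → α) (c : α)
    (v : Fin (m + 3)) :
    colorDeg (cycleGraph (m + 3)) φ c v =
      (if φ s(v, v - 1) = c then 1 else 0) + (if φ s(v, v + 1) = c then 1 else 0) := by
  rw [colorDeg_eq_card_filter, cycleGraph_neighborFinset, card_filter,
    sum_pair v.sub_one_ne_add_one]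

theorem isLocIrrColoring_cycleGraph (φ : Sym2 (Fin (m + 3)) → α) (g : Fin (m + 3) → α)
    (hφ : ∀ i, φ s(i, i + 1) = g i) (hg : ∀ i, g (i - 1) = g i ↔ g (i + 1) ≠ g i) :
    IsLocIrrColoring (cycleGraph (m + 3)) φ := by
  classical
  have hφ_swap : ∀ i, φ s(i + 1, i) = g i := fun i => Sym2.eq_swap ▸ hφ i
  have hφ_pred : ∀ i, φ s(i, i - 1) = g (i - 1) := fun i => by simpa using hφ_swap (i - 1)
  have hedge : ∀ u, colorDeg (cycleGraph (m + 3)) φ (g u) u ≠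
      colorDeg (cycleGraph (m + 3)) φ (g u) (u + 1) := by
    intro u
    rw [colorDeg_cycleGraph, colorDeg_cycleGraph, add_sub_cancel_right, hφ_pred, hφ, hφ,
      hφ_swap]
    by_cases h : g (u + 1) = g u <;> simp [h, hg u]
  intro v w hadj
  rw [← mem_neighborSet, cycleGraph_neighborSet, Set.mem_insert_iff,
    Set.mem_singleton_iff] at hadj
  rcases hadj with rfl | rfl
  · rw [hφ_pred]
    simpa using (hedge (v - 1)).symm
  · rw [hφ]
    exact hedge v

theorem exists_isLocIrrColoring_cycleGraph (g : Fin (m + 3) → α)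
    (hg : ∀ i, g (i - 1) = g i ↔ g (i + 1) ≠ g i) :
    ∃ φ : Sym2 (Fin (m + 3)) → α, IsLocIrrColoring (cycleGraph (m + 3)) φ :=
  ⟨Function.extend (fun i => s(i, i + 1)) g fun _ => g 0,
    isLocIrrColoring_cycleGraph _ g (Fin.sym2_add_one_injective.extend_apply g _) hg⟩

end Cycle

-- The colour of the edge `s(i, i + 1)`.
def pairedColoring (n : ℕ) (i : Fin n) : Fin 2 := ⟨i % 4 / 2, by omega⟩

theorem pairedColoring_sub_one_eq_iff {m : ℕ} (h4 : 4 ∣ m + 3) (i : Fin (m + 3)) :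
    pairedColoring _ (i - 1) = pairedColoring _ i ↔
      pairedColoring _ (i + 1) ≠ pairedColoring _ i := by
  have h_succ : (i + 1).val % 4 = (i.val + 1) % 4 := by
    rw [Fin.val_add, Fin.val_one, Nat.mod_mod_of_dvd _ h4]
  have h_pred : (i - 1).val % 4 = (i.val + 3) % 4 := by
    rw [Fin.val_sub, Fin.val_one, Nat.mod_mod_of_dvd _ h4]
    omega
  simp only [pairedColoring, ne_eq, Fin.ext_iff]
  omega

/-- Every cycle whose length is divisible by 4 admits a locally irregular edge
coloring with 2 colors. -/
theorem cycle_div_four_two_colorable (n : ℕ) (h4 : 4 ∣ n) (hpos : 0 < n) :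
    ∃ φ : Sym2 (Fin n) → Fin 2,
      IsLocIrrColoring (SimpleGraph.cycleGraph n) φ := by
  obtain ⟨m, rfl⟩ : ∃ m, n = m + 3 := ⟨n - 3, by omega⟩
  exact exists_isLocIrrColoring_cycleGraph _ (pairedColoring_sub_one_eq_iff h4)
end

section
/- Let G be a colorable graph admitting a locally irregular edge coloring with k ≥ 3 colors, and let u be a leaf of G. Then the graph G' obtained from G by appending a path of even length at u also admits a locally irregular edge coloring with k colors. -/
/-- The graph obtained from G by appending a path with m edges at the vertex u:
the new vertices are indexed by Fin m, with u joined to the new vertex 0 and new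
vertex i joined to new vertex i + 1. -/
def appendPath {V : Type*} (G : SimpleGraph V) (u : V) (m : ℕ) :
    SimpleGraph (V ⊕ Fin m) :=
  SimpleGraph.fromRel (fun a b =>
    match a, b with
    | Sum.inl x, Sum.inl y => G.Adj x y
    | Sum.inl x, Sum.inr i => x = u ∧ (i : ℕ) = 0
    | Sum.inr i, Sum.inr j => (j : ℕ) = (i : ℕ) + 1
    | _, _ => False)

section Aux

open Sum

variable {V α : Type*}

/-- The alternating "pair" coloring of path edges: edge number `t` gets color `a`
if `⌊t/2⌋` is even and `b` otherwise. -/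
def pc (a b : α) (t : ℕ) : α := if (t / 2) % 2 = 0 then a else b

/-- Extension of a coloring `φ` of `G` to the graph with an appended path. -/
def extColoring (φ : Sym2 V → α) (a b : α) (m : ℕ) :
    Sym2 (V ⊕ Fin m) → α :=
  Sym2.lift ⟨fun x y =>
    match x, y with
    | inl x, inl y => φ s(x, y)
    | inl _, inr _ => a
    | inr _, inl _ => a
    | inr i, inr j => pc a b (min i.val j.val + 1),
    by
      intro x y
      cases x <;> cases y
      · exact congrArg φ Sym2.eq_swap
      · rfl
      · rfl
      · simp [Nat.min_comm]⟩

@[simp] lemma extColoring_inl_inl (φ : Sym2 V → α) (a b : α) (m : ℕ) (x y : V) :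
    extColoring φ a b m s(inl x, inl y) = φ s(x, y) := rfl

@[simp] lemma extColoring_inl_inr (φ : Sym2 V → α) (a b : α) (m : ℕ) (x : V) (i : Fin m) :
    extColoring φ a b m s(inl x, inr i) = a := rfl

@[simp] lemma extColoring_inr_inl (φ : Sym2 V → α) (a b : α) (m : ℕ) (x : V) (i : Fin m) :
    extColoring φ a b m s(inr i, inl x) = a := rfl

@[simp] lemma extColoring_inr_inr (φ : Sym2 V → α) (a b : α) (m : ℕ) (i j : Fin m) :
    extColoring φ a b m s(inr i, inr j) = pc a b (min i.val j.val + 1) := rfl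

variable {G : SimpleGraph V} {u : V} {m : ℕ}

@[simp] lemma appendPath_adj_inl_inl {x y : V} :
    (appendPath G u m).Adj (inl x) (inl y) ↔ G.Adj x y := by
  simp only [appendPath, SimpleGraph.fromRel_adj]
  constructor
  · rintro ⟨hne, h | h⟩
    · exact h
    · exact h.symm
  · intro h
    exact ⟨by simpa using h.ne, Or.inl h⟩

@[simp] lemma appendPath_adj_inl_inr {x : V} {i : Fin m} :
    (appendPath G u m).Adj (inl x) (inr i) ↔ x = u ∧ (i : ℕ) = 0 := by
  simp [appendPath, SimpleGraph.fromRel_adj]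

@[simp] lemma appendPath_adj_inr_inl {x : V} {i : Fin m} :
    (appendPath G u m).Adj (inr i) (inl x) ↔ x = u ∧ (i : ℕ) = 0 := by
  simp [appendPath, SimpleGraph.fromRel_adj]

@[simp] lemma appendPath_adj_inr_inr {i j : Fin m} :
    (appendPath G u m).Adj (inr i) (inr j) ↔ (j : ℕ) = (i : ℕ) + 1 ∨ (i : ℕ) = (j : ℕ) + 1 := by
  simp only [appendPath, SimpleGraph.fromRel_adj]
  constructor
  · rintro ⟨hne, h | h⟩
    · exact Or.inl h
    · exact Or.inr h
  · intro h
    refine ⟨fun he => ?_, by tauto⟩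
    cases he
    omega

lemma colorDeg_eq_ncard (G : SimpleGraph V) (φ : Sym2 V → α) (c : α) (v : V) :
    colorDeg G φ c v = {w : V | G.Adj v w ∧ φ s(v, w) = c}.ncard :=
  Nat.card_coe_set_eq _

/-- For an old vertex `x`, provided it is not `u` with color `a`, the color degree
is unchanged. -/
lemma colorDeg_inl (φ : Sym2 V → α) (a b d : α) (x : V) (h : x ≠ u ∨ d ≠ a) :
    colorDeg (appendPath G u m) (extColoring φ a b m) d (inl x) = colorDeg G φ d x := by
  rw [colorDeg_eq_ncard, colorDeg_eq_ncard]
  have hset : {w : V ⊕ Fin m | (appendPath G u m).Adj (inl x) w ∧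
      extColoring φ a b m s(inl x, w) = d} =
      Sum.inl '' {w : V | G.Adj x w ∧ φ s(x, w) = d} := by
    ext w
    cases w with
    | inl y => simp
    | inr i =>
      simp only [Set.mem_setOf_eq, appendPath_adj_inl_inr, extColoring_inl_inr,
        Set.mem_image]
      constructor
      · rintro ⟨⟨hxu, _⟩, had⟩
        rcases h with h | h
        · exact absurd hxu h
        · exact absurd had.symm h
      · rintro ⟨_, _, h⟩
        exact absurd h (by simp)
  rw [hset, Set.ncard_image_of_injective _ Sum.inl_injective]

/-- The `a`-degree of `u` in the extended graph is `1` (when `m > 0` and no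
`G`-edge at `u` is colored `a`). -/
lemma colorDeg_inl_u (φ : Sym2 V → α) (a b : α) (v : V)
    (hv : ∀ w, G.Adj u w ↔ w = v) (hav : φ s(u, v) ≠ a) (hm : 0 < m) :
    colorDeg (appendPath G u m) (extColoring φ a b m) a (inl u) = 1 := by
  rw [colorDeg_eq_ncard]
  have hset : {w : V ⊕ Fin m | (appendPath G u m).Adj (inl u) w ∧
      extColoring φ a b m s(inl u, w) = a} = {inr ⟨0, hm⟩} := by
    ext w
    cases w with
    | inl y =>
      simp only [Set.mem_setOf_eq, appendPath_adj_inl_inl, extColoring_inl_inl,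
        Set.mem_singleton_iff]
      constructor
      · rintro ⟨hadj, hcol⟩
        rw [hv] at hadj
        subst hadj
        exact absurd hcol hav
      · rintro ⟨⟩
    | inr i =>
      simp only [Set.mem_setOf_eq, appendPath_adj_inl_inr, extColoring_inl_inr,
        Set.mem_singleton_iff, Sum.inr.injEq, Fin.ext_iff]
      tauto
  rw [hset, Set.ncard_singleton]

/-- Explicit formula for the color degree of a new vertex. -/
def pdeg [DecidableEq α] (a b : α) (m : ℕ) (i : Fin m) (d : α) : ℕ :=
  (if pc a b i.val = d then 1 else 0) +
  (if i.val + 1 < m ∧ pc a b (i.val + 1) = d then 1 else 0)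

lemma colorDeg_inr [DecidableEq α] (φ : Sym2 V → α) (a b d : α) (i : Fin m) :
    colorDeg (appendPath G u m) (extColoring φ a b m) d (inr i) = pdeg a b m i d := by
  rw [colorDeg_eq_ncard]
  set low : V ⊕ Fin m := if h0 : i.val = 0 then inl u else inr ⟨i.val - 1, by omega⟩ with hlow
  -- membership characterisation
  have hmem : ∀ w : V ⊕ Fin m,
      ((appendPath G u m).Adj (inr i) w ∧ extColoring φ a b m s(inr i, w) = d) ↔
      ((pc a b i.val = d ∧ w = low) ∨
        (∃ h : i.val + 1 < m, pc a b (i.val + 1) = d ∧ w = inr ⟨i.val + 1, h⟩)) := by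
    intro w
    cases w with
    | inl x =>
      simp only [appendPath_adj_inr_inl, extColoring_inr_inl]
      constructor
      · rintro ⟨⟨hxu, hi0⟩, had⟩
        subst hxu
        left
        rw [hlow]
        rw [dif_pos hi0]
        refine ⟨?_, rfl⟩
        rw [show pc a b i.val = a by simp [pc, hi0]]
        exact had
      · rintro (⟨hcd, hw⟩ | ⟨h, hcd, hw⟩)
        · rw [hlow] at hw
          by_cases h0 : i.val = 0
          · rw [dif_pos h0] at hw
            cases hw
            exact ⟨⟨rfl, h0⟩, by rwa [show pc a b i.val = a by simp [pc, h0]] at hcd⟩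
          · rw [dif_neg h0] at hw
            exact absurd hw (by simp)
        · exact absurd hw (by simp)
    | inr j =>
      simp only [appendPath_adj_inr_inr, extColoring_inr_inr]
      constructor
      · rintro ⟨hj | hj, hcd⟩
        · right
          have hlt : i.val + 1 < m := hj ▸ j.isLt
          refine ⟨hlt, ?_, ?_⟩
          · rwa [show min i.val j.val = i.val by omega] at hcd
          · exact congrArg Sum.inr (Fin.ext hj)
        · left
          have h0 : i.val ≠ 0 := by omega
          rw [hlow, dif_neg h0]
          refine ⟨?_, ?_⟩
          · rwa [show min i.val j.val + 1 = i.val by omega] at hcd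
          · exact congrArg Sum.inr (Fin.ext (by simp only [Fin.val_mk]; omega))
      · rintro (⟨hcd, hw⟩ | ⟨h, hcd, hw⟩)
        · rw [hlow] at hw
          by_cases h0 : i.val = 0
          · rw [dif_pos h0] at hw
            exact absurd hw (by simp)
          · rw [dif_neg h0] at hw
            have hj : j.val = i.val - 1 := by
              have := Sum.inr_injective hw
              simpa [Fin.ext_iff] using this
            refine ⟨Or.inr (by omega), ?_⟩
            rwa [show min i.val j.val + 1 = i.val by omega]
        · have hj : j.val = i.val + 1 := by
            have := Sum.inr_injective hw
            simpa [Fin.ext_iff] using this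
          refine ⟨Or.inl hj, ?_⟩
          rwa [show min i.val j.val + 1 = i.val + 1 by omega]
  have hlow_ne : ∀ h : i.val + 1 < m, low ≠ inr ⟨i.val + 1, h⟩ := by
    intro h
    rw [hlow]
    split_ifs with h0
    · simp
    · simp only [ne_eq, Sum.inr.injEq, Fin.ext_iff]
      omega
  by_cases hc1 : pc a b i.val = d <;> by_cases hc2 : i.val + 1 < m ∧ pc a b (i.val + 1) = d
  · have hset : {w : V ⊕ Fin m | (appendPath G u m).Adj (inr i) w ∧
        extColoring φ a b m s(inr i, w) = d} = {low, inr ⟨i.val + 1, hc2.1⟩} := by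
      ext w
      rw [Set.mem_setOf_eq, hmem w]
      simp only [Set.mem_insert_iff, Set.mem_singleton_iff]
      constructor
      · rintro (⟨_, hw⟩ | ⟨_, _, hw⟩) <;> tauto
      · rintro (hw | hw)
        · exact Or.inl ⟨hc1, hw⟩
        · exact Or.inr ⟨hc2.1, hc2.2, hw⟩
    rw [hset, Set.ncard_pair (hlow_ne hc2.1), pdeg, if_pos hc1, if_pos hc2]
  · have hset : {w : V ⊕ Fin m | (appendPath G u m).Adj (inr i) w ∧
        extColoring φ a b m s(inr i, w) = d} = {low} := by
      ext w
      rw [Set.mem_setOf_eq, hmem w]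
      simp only [Set.mem_singleton_iff]
      constructor
      · rintro (⟨_, hw⟩ | ⟨h, hcd, _⟩)
        · exact hw
        · exact absurd ⟨h, hcd⟩ hc2
      · intro hw
        exact Or.inl ⟨hc1, hw⟩
    rw [hset, Set.ncard_singleton, pdeg, if_pos hc1, if_neg hc2]
  · have hset : {w : V ⊕ Fin m | (appendPath G u m).Adj (inr i) w ∧
        extColoring φ a b m s(inr i, w) = d} = {inr ⟨i.val + 1, hc2.1⟩} := by
      ext w
      rw [Set.mem_setOf_eq, hmem w]
      simp only [Set.mem_singleton_iff]
      constructor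
      · rintro (⟨hcd, _⟩ | ⟨_, _, hw⟩)
        · exact absurd hcd hc1
        · exact hw
      · intro hw
        exact Or.inr ⟨hc2.1, hc2.2, hw⟩
    rw [hset, Set.ncard_singleton, pdeg, if_neg hc1, if_pos hc2]
  · have hset : {w : V ⊕ Fin m | (appendPath G u m).Adj (inr i) w ∧
        extColoring φ a b m s(inr i, w) = d} = ∅ := by
      ext w
      rw [Set.mem_setOf_eq, hmem w]
      simp only [Set.mem_empty_iff_false, iff_false]
      rintro (⟨hcd, _⟩ | ⟨h, hcd, _⟩)
      · exact hc1 hcd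
      · exact hc2 ⟨h, hcd⟩
    rw [hset, Set.ncard_empty, pdeg, if_neg hc1, if_neg hc2]

end Aux

/-- If G admits a locally irregular edge coloring with k ≥ 3 colors and u is a
leaf of G, then the graph obtained from G by appending a path of even length at u
also admits a locally irregular edge coloring with k colors. -/
theorem append_even_path_at_leaf {V : Type*} [Fintype V] [DecidableEq V]
    (G : SimpleGraph V) [DecidableRel G.Adj] (u : V) (hu : G.degree u = 1)
    (k : ℕ) (hk : 3 ≤ k)
    (hcol : ∃ φ : Sym2 V → Fin k, IsLocIrrColoring G φ) (r : ℕ) :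
    ∃ ψ : Sym2 (V ⊕ Fin (2 * r)) → Fin k,
      IsLocIrrColoring (appendPath G u (2 * r)) ψ := by
  classical
  obtain ⟨φ, hφ⟩ := hcol
  obtain ⟨v, hv⟩ := Finset.card_eq_one.mp hu
  have hv' : ∀ w, G.Adj u w ↔ w = v := fun w => by
    rw [← SimpleGraph.mem_neighborFinset, hv, Finset.mem_singleton]
  set c : Fin k := φ s(u, v) with hc
  obtain ⟨a, b, hac, hbc, hab⟩ : ∃ a b : Fin k, a ≠ c ∧ b ≠ c ∧ a ≠ b := by
    by_cases h0 : c = ⟨0, by omega⟩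
    · exact ⟨⟨1, by omega⟩, ⟨2, by omega⟩, by simp [h0, Fin.ext_iff],
        by simp [h0, Fin.ext_iff], by simp [Fin.ext_iff]⟩
    · by_cases h1 : c = ⟨1, by omega⟩
      · exact ⟨⟨0, by omega⟩, ⟨2, by omega⟩, by simp [h1, Fin.ext_iff],
          by simp [h1, Fin.ext_iff], by simp [Fin.ext_iff]⟩
      · exact ⟨⟨0, by omega⟩, ⟨1, by omega⟩, fun h => h0 h.symm, fun h => h1 h.symm,
          by simp [Fin.ext_iff]⟩
  have hca : φ s(u, v) ≠ a := fun h => hac (by rw [hc, h])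
  refine ⟨extColoring φ a b (2 * r), ?_⟩
  -- pc equality criterion
  have pc_eq : ∀ s t : ℕ, pc a b s = pc a b t ↔ (s / 2) % 2 = (t / 2) % 2 := by
    intro s t
    unfold pc
    split_ifs with h1 h2 h2 <;> simp [hab, hab.symm] <;> omega
  -- key fact for old vertices
  have key : ∀ z w' : V, G.Adj z w' → (z ≠ u ∨ φ s(z, w') ≠ a) := by
    intro z w' hzw
    by_cases hz : z = u
    · subst hz
      right
      have hwv : w' = v := (hv' w').mp hzw
      subst hwv
      exact hca
    · exact Or.inl hz
  -- path degree comparison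
  have main : ∀ i j : Fin (2 * r), (j : ℕ) = (i : ℕ) + 1 →
      colorDeg (appendPath G u (2 * r)) (extColoring φ a b (2 * r))
        (pc a b ((i : ℕ) + 1)) (Sum.inr i) ≠
      colorDeg (appendPath G u (2 * r)) (extColoring φ a b (2 * r))
        (pc a b ((i : ℕ) + 1)) (Sum.inr j) := by
    intro i j hj
    rw [colorDeg_inr, colorDeg_inr]
    have hlt : (i : ℕ) + 1 < 2 * r := hj ▸ j.isLt
    rw [pdeg, pdeg, hj]
    by_cases hpar : (i : ℕ) % 2 = 0
    · have h1 : pc a b (i : ℕ) = pc a b ((i : ℕ) + 1) := (pc_eq _ _).mpr (by omega)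
      have h2 : ¬ (pc a b ((i : ℕ) + 1 + 1) = pc a b ((i : ℕ) + 1)) := by
        rw [pc_eq]
        omega
      rw [if_pos h1, if_pos ⟨hlt, rfl⟩, if_pos rfl, if_neg (by tauto)]
      omega
    · have h1 : ¬ (pc a b (i : ℕ) = pc a b ((i : ℕ) + 1)) := by
        rw [pc_eq]
        omega
      have hlt2 : (i : ℕ) + 1 + 1 < 2 * r := by omega
      have h2 : pc a b ((i : ℕ) + 1 + 1) = pc a b ((i : ℕ) + 1) := (pc_eq _ _).mpr (by omega)
      rw [if_neg h1, if_pos ⟨hlt, rfl⟩, if_pos rfl, if_pos ⟨hlt2, h2⟩]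
      omega
  intro p q hpq
  cases p with
  | inl x =>
    cases q with
    | inl y =>
      have hGxy : G.Adj x y := appendPath_adj_inl_inl.mp hpq
      rw [extColoring_inl_inl]
      rw [colorDeg_inl φ a b _ x (key x y hGxy),
        colorDeg_inl φ a b _ y (by
          rcases key y x hGxy.symm with h | h
          · exact Or.inl h
          · exact Or.inr (by rwa [Sym2.eq_swap]))]
      exact hφ hGxy
    | inr i =>
      obtain ⟨hxu, hi0⟩ := appendPath_adj_inl_inr.mp hpq
      subst hxu
      rw [extColoring_inl_inr]
      rw [colorDeg_inl_u φ a b v hv' hca i.pos, colorDeg_inr]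
      have h1 : pc a b (i : ℕ) = a := by simp [pc, hi0]
      have h2 : pc a b ((i : ℕ) + 1) = a := by simp [pc, hi0]
      have h3 : (i : ℕ) + 1 < 2 * r := by
        have := i.isLt
        omega
      rw [pdeg, if_pos h1, if_pos ⟨h3, h2⟩]
      omega
  | inr i =>
    cases q with
    | inl x =>
      obtain ⟨hxu, hi0⟩ := appendPath_adj_inr_inl.mp hpq
      subst hxu
      rw [extColoring_inr_inl]
      rw [colorDeg_inl_u φ a b v hv' hca i.pos, colorDeg_inr]
      have h1 : pc a b (i : ℕ) = a := by simp [pc, hi0]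
      have h2 : pc a b ((i : ℕ) + 1) = a := by simp [pc, hi0]
      have h3 : (i : ℕ) + 1 < 2 * r := by
        have := i.isLt
        omega
      rw [pdeg, if_pos h1, if_pos ⟨h3, h2⟩]
      omega
    | inr j =>
      rcases appendPath_adj_inr_inr.mp hpq with hj | hj
      · rw [extColoring_inr_inr, show min (i : ℕ) (j : ℕ) = (i : ℕ) by omega]
        exact main i j hj
      · rw [extColoring_inr_inr, show min (i : ℕ) (j : ℕ) = (j : ℕ) by omega]
        exact (main j i hj).symm
end
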